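/- arXiv:1710.06360 — 7 statements merged into one kernel-verified Lean document; each statement's English description precedes it below -/
import Mathlib

section
/- For any p ∈ [0,1] and δ ∈ (0,1), the binary relative entropy satisfies d(p, min{δ,p}) ≥ max{p * log(1/δ) - log 2, 0}. -/
/-- For `p ∈ [0,1]` and `δ ∈ (0,1)`, the binary relative entropy satisfies
`d(p, min{δ,p}) ≥ max{p log(1/δ) - log 2, 0}` (with the conventions
`d(0,0) = d(1,1) = 0`, which agree with the formula under Lean's
`Real.log 0 = 0` convention). -/
theorem binary_relative_entropy_min_lower_bound
    (p δ : ℝ) (hp : p ∈ Set.Icc (0:ℝ) 1) (hδ : δ ∈ Set.Ioo (0:ℝ) 1)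
    (d : ℝ → ℝ → ℝ)
    (hd : ∀ x y : ℝ, d x y =
      if (x = 0 ∧ y = 0) ∨ (x = 1 ∧ y = 1) then 0
      else x * Real.log (x / y) + (1 - x) * Real.log ((1 - x) / (1 - y))) :
    d p (min δ p) ≥ max (p * Real.log (1 / δ) - Real.log 2) 0 := by
  obtain ⟨hp0, hp1⟩ := hp
  obtain ⟨hδ0, hδ1⟩ := hδ
  have hlog1d : Real.log (1/δ) = -Real.log δ := by rw [one_div, Real.log_inv]
  have hlogδ : Real.log δ < 0 := Real.log_neg hδ0 hδ1
  have hlog2 : (0.6931471803 : ℝ) < Real.log 2 := Real.log_two_gt_d9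
  rcases le_or_gt p δ with hpd | hpd
  · rw [min_eq_right hpd]
    have hd0 : d p p = 0 := by
      rw [hd]
      rcases eq_or_lt_of_le hp0 with h0 | h0
      · simp [← h0]
      rcases eq_or_lt_of_le hp1 with h1 | h1
      · simp [← h1]
      · rw [if_neg (by rintro (⟨h, _⟩ | ⟨h, _⟩) <;> linarith),
          div_self (ne_of_gt h0), div_self (by linarith : (1:ℝ) - p ≠ 0)]
        simp
    rw [hd0, ge_iff_le, max_le_iff]
    refine ⟨?_, le_refl 0⟩
    -- p * log (1/δ) ≤ log 2 since p ≤ δ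
    have hs : 0 < Real.sqrt δ := Real.sqrt_pos.mpr hδ0
    have hL0 : 0 ≤ Real.log (1/δ) := by
      rw [hlog1d]; linarith
    have hlhalf : Real.log (1 / Real.sqrt δ) ≤ 1 / Real.sqrt δ - 1 :=
      Real.log_le_sub_one_of_pos (by positivity)
    have hlsq : Real.log (Real.sqrt δ) = Real.log δ / 2 := Real.log_sqrt hδ0.le
    have hlhalf' : Real.log (1 / Real.sqrt δ) = -(Real.log δ / 2) := by
      rw [one_div, Real.log_inv, hlsq]
    have hLb : Real.log (1/δ) ≤ 2 * (1 / Real.sqrt δ - 1) := by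
      rw [hlog1d]
      rw [hlhalf'] at hlhalf
      linarith
    have h1 : p * Real.log (1/δ) ≤ δ * Real.log (1/δ) :=
      mul_le_mul_of_nonneg_right hpd hL0
    have h2 : δ * Real.log (1/δ) ≤ δ * (2 * (1 / Real.sqrt δ - 1)) :=
      mul_le_mul_of_nonneg_left hLb hδ0.le
    have hds : δ / Real.sqrt δ = Real.sqrt δ := Real.div_sqrt
    have h3 : δ * (2 * (1 / Real.sqrt δ - 1)) = 2 * (Real.sqrt δ - δ) := by
      field_simp
      nlinarith [Real.sq_sqrt hδ0.le]
    have h4 : 2 * (Real.sqrt δ - δ) ≤ 1/2 := by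
      nlinarith [sq_nonneg (Real.sqrt δ - 1/2), Real.sq_sqrt hδ0.le]
    linarith
  · rw [min_eq_left hpd.le, hd,
      if_neg (by rintro (⟨h, h'⟩ | ⟨h, h'⟩) <;> linarith)]
    have hp0' : 0 < p := lt_trans hδ0 hpd
    rcases eq_or_lt_of_le hp1 with h1 | h1
    · subst h1
      simp only [sub_self, zero_mul, add_zero, one_mul, one_div, Real.log_inv]
      rw [ge_iff_le, max_le_iff]
      constructor <;> linarith
    · have h1p : 0 < 1 - p := by linarith
      have h1δ : 0 < 1 - δ := by linarith
      rw [Real.log_div (ne_of_gt hp0') (ne_of_gt hδ0),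
        Real.log_div (ne_of_gt h1p) (ne_of_gt h1δ)]
      have hbin : p * Real.log p + (1-p) * Real.log (1-p) ≥ -Real.log 2 := by
        have hb := Real.binEntropy_le_log_two (p := p)
        rw [Real.binEntropy, Real.log_inv, Real.log_inv] at hb
        linarith
      have hld : Real.log (1-δ) ≤ 0 := Real.log_nonpos h1δ.le (by linarith)
      have hld' : (1-p) * Real.log (1-δ) ≤ 0 :=
        mul_nonpos_of_nonneg_of_nonpos h1p.le hld
      rw [ge_iff_le, max_le_iff]
      constructor
      · rw [hlog1d]
        nlinarith
      · -- Gibbs: nonnegativity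
        have g1 : Real.log δ - Real.log p ≤ δ/p - 1 := by
          have := Real.log_le_sub_one_of_pos (show (0:ℝ) < δ/p by positivity)
          rwa [Real.log_div (ne_of_gt hδ0) (ne_of_gt hp0')] at this
        have g2 : Real.log (1-δ) - Real.log (1-p) ≤ (1-δ)/(1-p) - 1 := by
          have := Real.log_le_sub_one_of_pos (show (0:ℝ) < (1-δ)/(1-p) by positivity)
          rwa [Real.log_div (ne_of_gt h1δ) (ne_of_gt h1p)] at this
        have g1' : p * (Real.log δ - Real.log p) ≤ δ - p := by
          have h := mul_le_mul_of_nonneg_left g1 hp0'.le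
          have he : p * (δ/p - 1) = δ - p := by field_simp
          linarith
        have g2' : (1-p) * (Real.log (1-δ) - Real.log (1-p)) ≤ (1-δ) - (1-p) := by
          have h := mul_le_mul_of_nonneg_left g2 h1p.le
          have he : (1-p) * ((1-δ)/(1-p) - 1) = (1-δ) - (1-p) := by field_simp
          linarith
        nlinarith
end

section
/- Let m ≤ K be positive integers, λ ≤ m, δ ∈ (0,1), and let d_1 ≥ d_2 ≥ ... ≥ d_m > 0 be positive reals (with d_i nonincreasing in i). Consider the linear program: minimize ∑_{i=1}^m x_i/d_i subject to ∑_{i=1}^m p_i ≥ λ(1-δ), x_i ≥ p_i*log(1/δ) - log 2, 0 ≤ p_i ≤ 1, x_i ≥ 0 for all i. Then the optimal value C* of this linear program satisfies C* ≥ ∑_{i=1}^λ (1/d_i)*log(1/(2δ)) - m/d_λ. -/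
/-- Lower bound on the optimal value of the linear program `(P₂)` from the GAI
lower bound proof: any feasible `(p, x)` has objective value
`∑ x_i / d_i ≥ ∑_{i ≤ λ} (1/d_i) log(1/(2δ)) - m/d_λ`. -/
theorem lp_optimal_value_lower_bound
    (m K lam : ℕ) (hm : 1 ≤ m) (hmK : m ≤ K) (hlam1 : 1 ≤ lam) (hlam : lam ≤ m)
    (δ : ℝ) (hδ : δ ∈ Set.Ioo (0:ℝ) 1)
    (d : ℕ → ℝ) (hdpos : ∀ i ∈ Finset.Icc 1 m, 0 < d i)
    (hdmono : ∀ i j, 1 ≤ i → i ≤ j → j ≤ m → d j ≤ d i)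
    (p x : ℕ → ℝ)
    (hpsum : (lam : ℝ) * (1 - δ) ≤ ∑ i ∈ Finset.Icc 1 m, p i)
    (hx : ∀ i ∈ Finset.Icc 1 m, p i * Real.log (1 / δ) - Real.log 2 ≤ x i)
    (hp0 : ∀ i ∈ Finset.Icc 1 m, 0 ≤ p i)
    (hp1 : ∀ i ∈ Finset.Icc 1 m, p i ≤ 1)
    (hx0 : ∀ i ∈ Finset.Icc 1 m, 0 ≤ x i) :
    (∑ i ∈ Finset.Icc 1 lam, (1 / d i) * Real.log (1 / (2 * δ))) - (m : ℝ) / d lam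
      ≤ ∑ i ∈ Finset.Icc 1 m, x i / d i := by
  obtain ⟨hδ0, hδ1⟩ := hδ
  set c := Real.log 2 with hcdef
  set L := Real.log (1/δ) with hLdef
  have hc0 : 0 ≤ c := Real.log_nonneg (by norm_num)
  have hc1 : c ≤ 1 := by
    have := Real.log_le_sub_one_of_pos (show (0:ℝ) < 2 by norm_num)
    linarith
  have hL0 : 0 ≤ L := Real.log_nonneg (by rw [le_div_iff₀ hδ0]; linarith)
  have hδL : δ * L ≤ 1 := by
    have h := Real.log_le_sub_one_of_pos (show (0:ℝ) < 1/δ by positivity)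
    have h2 : δ * (1/δ) = 1 := by field_simp
    nlinarith
  have hlog2δ : Real.log (1/(2*δ)) = L - c := by
    rw [one_div, Real.log_inv, Real.log_mul (by norm_num) (ne_of_gt hδ0), hLdef,
      one_div, Real.log_inv]
    ring
  have hlamm : lam ∈ Finset.Icc 1 m := Finset.mem_Icc.2 ⟨hlam1, hlam⟩
  have hdl : 0 < d lam := hdpos lam hlamm
  -- split sums
  have hsplit : ∀ f : ℕ → ℝ, ∑ i ∈ Finset.Icc 1 m, f i
      = ∑ i ∈ Finset.Icc 1 lam, f i + ∑ i ∈ Finset.Icc (lam+1) m, f i := by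
    intro f
    rw [show Finset.Icc 1 m = Finset.Ioc 0 m from Finset.Icc_add_one_left_eq_Ioc 0 m,
      show Finset.Icc 1 lam = Finset.Ioc 0 lam from Finset.Icc_add_one_left_eq_Ioc 0 lam,
      show Finset.Icc (lam+1) m = Finset.Ioc lam m from Finset.Icc_add_one_left_eq_Ioc lam m]
    exact (Finset.sum_Ioc_consecutive f (Nat.zero_le lam) hlam).symm
  -- pointwise bound on the first block
  have hA : ∑ i ∈ Finset.Icc 1 lam, ((L - c)/d i - (1 - p i)*L/d lam)
      ≤ ∑ i ∈ Finset.Icc 1 lam, x i / d i := by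
    apply Finset.sum_le_sum
    intro i hi
    obtain ⟨hi1, hi2⟩ := Finset.mem_Icc.1 hi
    have hi' : i ∈ Finset.Icc 1 m := Finset.mem_Icc.2 ⟨hi1, le_trans hi2 hlam⟩
    have hdi : 0 < d i := hdpos i hi'
    have hle : d lam ≤ d i := hdmono i lam hi1 hi2 hlam
    have hxi := hx i hi'
    have hpi1 := hp1 i hi'
    have h1 : (p i * L - c)/d i ≤ x i / d i := by
      apply div_le_div_of_nonneg_right hxi hdi.le
    have h2 : (1 - p i)*L/d i ≤ (1 - p i)*L/d lam :=
      div_le_div_of_nonneg_left (by nlinarith) hdl hle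
    have heq : (L - c)/d i - (1 - p i)*L/d i = (p i * L - c)/d i := by
      field_simp
      ring
    linarith
  -- pointwise bound on the second block
  have hB : ∑ i ∈ Finset.Icc (lam+1) m, ((p i * L - c)/d lam)
      ≤ ∑ i ∈ Finset.Icc (lam+1) m, x i / d i := by
    apply Finset.sum_le_sum
    intro i hi
    obtain ⟨hi1, hi2⟩ := Finset.mem_Icc.1 hi
    have hi' : i ∈ Finset.Icc 1 m := Finset.mem_Icc.2 ⟨le_trans hlam1 (le_of_lt hi1), hi2⟩
    have hdi : 0 < d i := hdpos i hi'
    have hle : d i ≤ d lam := hdmono lam i hlam1 (le_of_lt hi1) hi2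
    have hxi := hx i hi'
    have hx0i := hx0 i hi'
    by_cases hcase : p i * L - c ≤ 0
    · have hleft : (p i * L - c)/d lam ≤ 0 :=
        div_nonpos_of_nonpos_of_nonneg hcase hdl.le
      have hright : 0 ≤ x i / d i := div_nonneg hx0i hdi.le
      linarith
    · push_neg at hcase
      have h1 : (p i * L - c)/d lam ≤ (p i * L - c)/d i :=
        div_le_div_of_nonneg_left hcase.le hdi hle
      have h2 : (p i * L - c)/d i ≤ x i / d i := div_le_div_of_nonneg_right hxi hdi.le
      linarith
  -- rewrite the target using log(1/(2δ)) = L - c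
  rw [hlog2δ, hsplit (fun i => x i / d i)]
  -- reduce to a numerator inequality over d lam
  have hsum1 : ∑ i ∈ Finset.Icc 1 lam, ((L - c)/d i - (1 - p i)*L/d lam)
      = ∑ i ∈ Finset.Icc 1 lam, (1/d i) * (L - c)
        - ((↑lam - ∑ i ∈ Finset.Icc 1 lam, p i) * L) / d lam := by
    rw [Finset.sum_sub_distrib]
    congr 1
    · apply Finset.sum_congr rfl
      intro i _
      rw [one_div, div_eq_mul_inv, mul_comm]
    · rw [← Finset.sum_div, ← Finset.sum_mul, Finset.sum_sub_distrib,
        Finset.sum_const, Nat.card_Icc]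
      simp
  have hsum2 : ∑ i ∈ Finset.Icc (lam+1) m, ((p i * L - c)/d lam)
      = ((∑ i ∈ Finset.Icc (lam+1) m, p i) * L - (↑m - ↑lam) * c) / d lam := by
    rw [← Finset.sum_div, Finset.sum_sub_distrib, ← Finset.sum_mul,
      Finset.sum_const, Nat.card_Icc, nsmul_eq_mul]
    congr 3
    rw [Nat.cast_sub (by omega)]
    push_cast
    ring
  -- numerator inequality
  set P1 := ∑ i ∈ Finset.Icc 1 lam, p i with hP1
  set P2 := ∑ i ∈ Finset.Icc (lam+1) m, p i with hP2
  have hPsum : (lam : ℝ) * (1 - δ) ≤ P1 + P2 := by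
    rw [hP1, hP2, ← hsplit p]
    exact hpsum
  have hnum : ((↑lam - P1) * L) - (P2 * L - (↑m - ↑lam) * c) ≤ (m : ℝ) := by
    have hlm : (lam : ℝ) ≤ (m : ℝ) := by exact_mod_cast hlam
    have h1 : (↑lam - P1 - P2) * L ≤ (lam : ℝ) * δ * L := by
      apply mul_le_mul_of_nonneg_right _ hL0
      linarith
    have h2 : (lam : ℝ) * δ * L ≤ lam := by
      have : (lam : ℝ) * (δ * L) ≤ (lam : ℝ) * 1 :=
        mul_le_mul_of_nonneg_left hδL (by positivity)
      linarith [this]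
    have h3 : ((↑m : ℝ) - ↑lam) * c ≤ (↑m - ↑lam) := by
      nlinarith
    nlinarith
  have hfrac : (((↑lam - P1) * L) - (P2 * L - (↑m - ↑lam) * c)) / d lam
      ≤ (m : ℝ) / d lam := div_le_div_of_nonneg_right hnum hdl.le
  have hkey : ∑ i ∈ Finset.Icc 1 lam, (1/d i) * (L - c) - (m : ℝ) / d lam
      ≤ ∑ i ∈ Finset.Icc 1 lam, x i / d i + ∑ i ∈ Finset.Icc (lam+1) m, x i / d i := by
    have := hA
    rw [hsum1] at this
    have hdiv : (((↑lam - P1) * L) - (P2 * L - (↑m - ↑lam) * c)) / d lam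
        = ((↑lam - P1) * L) / d lam - (P2 * L - (↑m - ↑lam) * c) / d lam := by
      ring
    rw [hdiv] at hfrac
    rw [hsum2] at hB
    linarith
  exact hkey
end

section
/- Let m ≤ K be positive integers and λ ≤ m. Let p_1, ..., p_m ∈ [0,1] satisfy ∑_{i=1}^m p_i ≥ λ(1-δ) for some δ ∈ (0,1), and let d_1 ≥ ... ≥ d_m > 0 be nonincreasing positive reals. Then ∑_{i=1}^m (1/d_i) * max{p_i * log(1/δ) - log 2, 0} ≥ ∑_{i=1}^λ (1/d_i) * log(1/(2δ)) - m/d_λ. -/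
/-!
Write `L = log (1/δ)` and `c = 1/d_λ`. Each of the first `λ` terms is at least
`(1/d_i)(L - log 2) - c (1 - p_i) L`, because `1/d_i ≤ c` there, and each later term is at least
`c (p_i L - log 2)`, because `1/d_i ≥ c` there. Summing, the lower bound exceeds
`∑_{i ≤ λ} (1/d_i) log (1/(2δ))` by `c (L ∑ p_i - λ L - (m - λ) log 2)`, and this is at least
`-c m` since `L ∑ p_i ≥ λ L - λ δ L`, `δ L ≤ 1` and `log 2 ≤ 1`.
-/

open Finset Real

theorem Finset.sum_Icc_one_eq_add_sum_Ioc {M : Type*} [AddCommMonoid M] (f : ℕ → M) {l n : ℕ}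
    (h : l ≤ n) : ∑ i ∈ Icc 1 n, f i = ∑ i ∈ Icc 1 l, f i + ∑ i ∈ Ioc l n, f i := by
  have hIcc (k : ℕ) : Icc 1 k = Ioc 0 k := Icc_succ_left_eq_Ioc 0 k
  rw [hIcc, hIcc]
  exact (sum_Ioc_consecutive f l.zero_le h).symm

theorem Real.mul_log_one_div_le_one {δ : ℝ} (hδ : 0 ≤ δ) : δ * log (1 / δ) ≤ 1 := by
  have := negMulLog_le_one_sub_self hδ
  rw [negMulLog, one_div, log_inv] at *
  linarith

theorem Real.log_two_le_one : log 2 ≤ 1 :=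
  log_two_lt_d9.le.trans (by norm_num)

/-- `q L - a` falls short of `L - a` by `(1 - q) L ≥ 0`, and that shortfall is charged at the larger
weight `c`. -/
theorem mul_sub_le_mul_max_of_le_one {c c' L q a : ℝ} (hc' : 0 ≤ c') (hcc' : c' ≤ c) (hL : 0 ≤ L)
    (hq : q ≤ 1) : c' * (L - a) + c * (q * L) - c * L ≤ c' * max (q * L - a) 0 := by
  have hshort : 0 ≤ (c - c') * ((1 - q) * L) := by
    apply mul_nonneg <;> [linarith; exact mul_nonneg (by linarith) hL]
  calc c' * (L - a) + c * (q * L) - c * L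
      = c' * (q * L - a) - (c - c') * ((1 - q) * L) := by ring
    _ ≤ c' * (q * L - a) := by linarith
    _ ≤ c' * max (q * L - a) 0 := mul_le_mul_of_nonneg_left (le_max_left _ _) hc'

theorem mul_le_mul_max_zero {c c' x : ℝ} (hc : 0 ≤ c) (hcc' : c ≤ c') :
    c * x ≤ c' * max x 0 :=
  calc c * x ≤ c * max x 0 := mul_le_mul_of_nonneg_left (le_max_left _ _) hc
    _ ≤ c' * max x 0 := mul_le_mul_of_nonneg_right hcc' (le_max_right _ _)

theorem primal_lower_bound_general
    (m lam : ℕ) (hlam1 : 1 ≤ lam) (hlam : lam ≤ m)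
    (δ : ℝ) (hδ : δ ∈ Set.Ioo (0:ℝ) 1)
    (d : ℕ → ℝ) (hdpos : ∀ i ∈ Finset.Icc 1 m, 0 < d i)
    (hdmono : ∀ i j, 1 ≤ i → i ≤ j → j ≤ m → d j ≤ d i)
    (p : ℕ → ℝ)
    (hp1 : ∀ i ∈ Finset.Icc 1 m, p i ≤ 1)
    (hpsum : (lam : ℝ) * (1 - δ) ≤ ∑ i ∈ Finset.Icc 1 m, p i) :
    (∑ i ∈ Finset.Icc 1 lam, (1 / d i) * Real.log (1 / (2 * δ))) - (m : ℝ) / d lam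
      ≤ ∑ i ∈ Finset.Icc 1 m,
          (1 / d i) * max (p i * Real.log (1 / δ) - Real.log 2) 0 := by
  obtain ⟨hδ0, hδ1⟩ := hδ
  set L := log (1 / δ)
  set c := 1 / d lam
  have hL : 0 ≤ L := log_nonneg (by rw [le_div_iff₀ hδ0]; linarith)
  have hdlam : 0 < d lam := hdpos lam (mem_Icc.mpr ⟨hlam1, hlam⟩)
  have hc : 0 ≤ c := one_div_nonneg.mpr hdlam.le
  have hhead : ∑ i ∈ Icc 1 lam, (1 / d i * (L - log 2) + c * (p i * L) - c * L)
      ≤ ∑ i ∈ Icc 1 lam, 1 / d i * max (p i * L - log 2) 0 := by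
    refine sum_le_sum fun i hi => ?_
    obtain ⟨hi1, hil⟩ := mem_Icc.mp hi
    have him : i ∈ Icc 1 m := mem_Icc.mpr ⟨hi1, hil.trans hlam⟩
    exact mul_sub_le_mul_max_of_le_one (one_div_nonneg.mpr (hdpos i him).le)
      (one_div_le_one_div_of_le hdlam (hdmono i lam hi1 hil hlam))
      hL (hp1 i him)
  have htail : ∑ i ∈ Ioc lam m, (c * (p i * L) - c * log 2)
      ≤ ∑ i ∈ Ioc lam m, 1 / d i * max (p i * L - log 2) 0 := by
    refine sum_le_sum fun i hi => ?_
    obtain ⟨hli, him⟩ := mem_Ioc.mp hi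
    rw [← mul_sub]
    exact mul_le_mul_max_zero hc (one_div_le_one_div_of_le
      (hdpos i (mem_Icc.mpr ⟨hlam1.trans hli.le, him⟩)) (hdmono lam i hlam1 hli.le him))
  have hlog : log (1 / (2 * δ)) = L - log 2 := by
    simp only [L, one_div, log_inv, log_mul two_ne_zero hδ0.ne']; ring
  rw [sum_Icc_one_eq_add_sum_Ioc _ hlam] at hpsum ⊢
  simp only [sum_add_distrib, sum_sub_distrib, sum_const, Nat.card_Icc, Nat.card_Ioc, nsmul_eq_mul,
    ← mul_sum, ← sum_mul] at hhead htail
  have hδL := mul_log_one_div_le_one hδ0.le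
  rw [hlog, ← sum_mul, div_eq_mul_one_div (m : ℝ)]
  push_cast [Nat.cast_sub hlam] at hhead htail
  linarith [mul_le_mul_of_nonneg_right hpsum (mul_nonneg hc hL),
    mul_le_mul_of_nonneg_left hδL (mul_nonneg (Nat.cast_nonneg lam) hc),
    mul_le_mul_of_nonneg_left log_two_le_one (mul_nonneg (sub_nonneg.mpr (Nat.cast_le.mpr hlam)) hc)]

/-- Primal form of the GAI lower-bound optimization: if `p_i ∈ [0,1]` with
`∑ p_i ≥ λ(1-δ)` and `d_1 ≥ ⋯ ≥ d_m > 0`, then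
`∑_i (1/d_i) max{p_i log(1/δ) - log 2, 0}
  ≥ ∑_{i ≤ λ} (1/d_i) log(1/(2δ)) - m/d_λ`. -/
theorem primal_lower_bound
    (m K lam : ℕ) (hm : 1 ≤ m) (hmK : m ≤ K) (hlam1 : 1 ≤ lam) (hlam : lam ≤ m)
    (δ : ℝ) (hδ : δ ∈ Set.Ioo (0:ℝ) 1)
    (d : ℕ → ℝ) (hdpos : ∀ i ∈ Finset.Icc 1 m, 0 < d i)
    (hdmono : ∀ i j, 1 ≤ i → i ≤ j → j ≤ m → d j ≤ d i)
    (p : ℕ → ℝ)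
    (hp0 : ∀ i ∈ Finset.Icc 1 m, 0 ≤ p i)
    (hp1 : ∀ i ∈ Finset.Icc 1 m, p i ≤ 1)
    (hpsum : (lam : ℝ) * (1 - δ) ≤ ∑ i ∈ Finset.Icc 1 m, p i) :
    (∑ i ∈ Finset.Icc 1 lam, (1 / d i) * Real.log (1 / (2 * δ))) - (m : ℝ) / d lam
      ≤ ∑ i ∈ Finset.Icc 1 m,
          (1 / d i) * max (p i * Real.log (1 / δ) - Real.log 2) 0 :=
  primal_lower_bound_general m lam hlam1 hlam δ hδ d hdpos hdmono p hp1 hpsum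
end

section
/- Let (X_n) be i.i.d. random variables taking values in [0,1] with mean μ, and let μ̂_n = (1/n) ∑_{k=1}^n X_k. Fix K ≥ 1, δ ∈ (0,1) and ξ ≤ μ. Then the probability that there exists some n ∈ ℕ with μ̂_n + sqrt(log(4*K*n²/δ)/(2n)) < ξ is at most δ/K. -/
/-!
By Hoeffding's lemma each `μ - X i` is sub-Gaussian with variance proxy `1/4`, so the sum of `n`
of them exceeds `n ε` with probability at most `exp (-2 n ε²)`. With
`ε = √(log (4 K n² / δ) / (2 n))` this is `δ / (4 K n²)`, and a union bound over `n` gives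
`δ / (4 K) · π² / 6 ≤ δ / K`.
-/

open MeasureTheory ProbabilityTheory Real Finset

section Hoeffding

variable {Ω : Type*} [MeasurableSpace Ω] {P : Measure Ω} [IsProbabilityMeasure P]
  {X : ℕ → Ω → ℝ} {μ : ℝ}

lemma measureReal_sum_range_le_sub_le (hindep : iIndepFun X P) (hmeas : ∀ i, Measurable (X i))
    (hbdd : ∀ i, ∀ᵐ ω ∂P, X i ω ∈ Set.Icc (0 : ℝ) 1) (hmean : ∀ i, P[X i] = μ)
    (n : ℕ) {t : ℝ} (ht : 0 ≤ t) :
    P.real {ω | ∑ i ∈ range n, X i ω ≤ n * μ - t} ≤ exp (-2 * t ^ 2 / n) := by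
  have hcentered : iIndepFun (fun i ω ↦ μ - X i ω) P :=
    hindep.comp (fun _ x ↦ μ - x) fun _ ↦ measurable_const.sub measurable_id
  have hsubG : ∀ i < n, HasSubgaussianMGF (fun ω ↦ μ - X i ω) (1 / 4) P := fun i _ ↦ by
    have := (hasSubgaussianMGF_of_mem_Icc (hmeas i).aemeasurable (hbdd i)).neg
    simp only [hmean] at this
    convert this using 1
    · ext ω; simp
    · norm_num
  calc P.real {ω | ∑ i ∈ range n, X i ω ≤ n * μ - t}
      = P.real {ω | t ≤ ∑ i ∈ range n, (μ - X i ω)} := by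
        simp only [sum_sub_distrib, sum_const, card_range, nsmul_eq_mul, le_sub_comm]
    _ ≤ exp (-t ^ 2 / (2 * n * (1 / 4 : NNReal))) :=
        HasSubgaussianMGF.measure_sum_range_ge_le_of_iIndepFun hcentered hsubG ht
    _ = exp (-2 * t ^ 2 / n) := by congr 1; push_cast; ring

lemma measure_empiricalMean_add_sqrt_log_lt_le (hindep : iIndepFun X P)
    (hmeas : ∀ i, Measurable (X i)) (hbdd : ∀ i, ∀ᵐ ω ∂P, X i ω ∈ Set.Icc (0 : ℝ) 1)
    (hmean : ∀ i, P[X i] = μ) {ξ : ℝ} (hξ : ξ ≤ μ) {n : ℕ} (hn : 0 < n) {x : ℝ} (hx : 0 < x) :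
    P {ω | (∑ k ∈ range n, X k ω) / n + √(log x / (2 * n)) < ξ} ≤ ENNReal.ofReal x⁻¹ := by
  set r := √(log x / (2 * n))
  have hn' : (0 : ℝ) < n := Nat.cast_pos.mpr hn
  have hsub : {ω | (∑ k ∈ range n, X k ω) / n + r < ξ}
      ⊆ {ω | ∑ k ∈ range n, X k ω ≤ n * μ - n * r} := fun ω hω ↦ by
    have := (div_lt_iff₀ hn').mp (lt_sub_iff_add_lt.mpr hω)
    simp only [Set.mem_ofPred_eq]
    nlinarith
  have hlog : log x ≤ 2 * n * r ^ 2 := by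
    have : log x / (2 * n) ≤ r ^ 2 := by
      rcases le_total 0 (log x / (2 * n)) with h | h
      · rw [sq_sqrt h]
      · exact h.trans (sq_nonneg r)
    rwa [div_le_iff₀ (by positivity), mul_comm] at this
  calc P {ω | (∑ k ∈ range n, X k ω) / n + r < ξ}
      ≤ P {ω | ∑ k ∈ range n, X k ω ≤ n * μ - n * r} := measure_mono hsub
    _ = ENNReal.ofReal (P.real {ω | ∑ k ∈ range n, X k ω ≤ n * μ - n * r}) :=
        (ofReal_measureReal).symm
    _ ≤ ENNReal.ofReal (exp (-2 * (n * r) ^ 2 / n)) := by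
        gcongr
        exact measureReal_sum_range_le_sub_le hindep hmeas hbdd hmean n (by positivity)
    _ ≤ ENNReal.ofReal x⁻¹ := by
        gcongr
        calc exp (-2 * (n * r) ^ 2 / n) = exp (-(2 * n * r ^ 2)) := by
              congr 1; field_simp
          _ ≤ exp (-log x) := by gcongr
          _ = x⁻¹ := by rw [exp_neg, exp_log hx]

end Hoeffding

lemma hasSum_inv_mul_sq (c : ℝ) : HasSum (fun n : ℕ ↦ (c * n ^ 2)⁻¹) (c⁻¹ * (π ^ 2 / 6)) := by
  simpa [mul_inv, mul_comm] using hasSum_zeta_two.mul_left c⁻¹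

theorem ucb_anytime_error_general
    {Ω : Type*} [MeasurableSpace Ω] (P : Measure Ω) [IsProbabilityMeasure P]
    (X : ℕ → Ω → ℝ) (hXmeas : ∀ n, Measurable (X n))
    (hindep : iIndepFun X P)
    (hbdd : ∀ n ω, X n ω ∈ Set.Icc (0:ℝ) 1)
    (μ : ℝ) (hmean : ∀ n, ∫ ω, X n ω ∂P = μ)
    (K : ℕ) (hK : 1 ≤ K) (δ : ℝ) (hδ : δ ∈ Set.Ioo (0:ℝ) 1)
    (ξ : ℝ) (hξ : ξ ≤ μ) :
    P {ω | ∃ n : ℕ, 1 ≤ n ∧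
        (∑ k ∈ Finset.range n, X k ω) / n
          + Real.sqrt (Real.log (4 * K * (n : ℝ) ^ 2 / δ) / (2 * n)) < ξ}
      ≤ ENNReal.ofReal (δ / K) := by
  obtain ⟨hδ₀, -⟩ := hδ
  have hK₀ : (0 : ℝ) < K := by exact_mod_cast hK
  have hterm : ∀ n : ℕ, P {ω | 1 ≤ n ∧ (∑ k ∈ range n, X k ω) / n
      + √(log (4 * K * (n : ℝ) ^ 2 / δ) / (2 * n)) < ξ}
        ≤ ENNReal.ofReal (4 * K / δ * n ^ 2)⁻¹ := fun n ↦ by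
    rcases Nat.eq_zero_or_pos n with rfl | hn
    · simp -- the event is empty and the bound is `0⁻¹ = 0`
    simp only [Nat.one_le_iff_ne_zero.mpr hn.ne', true_and, mul_div_right_comm _ _ δ]
    exact measure_empiricalMean_add_sqrt_log_lt_le hindep hXmeas
      (fun i ↦ ae_of_all _ (hbdd i)) hmean hξ hn (by positivity)
  have hpi : π ^ 2 / 6 ≤ 4 := by nlinarith [pi_lt_d2, pi_pos]
  rw [Set.ofPred_exists]
  calc P (⋃ n, _) ≤ ∑' n, P _ := measure_iUnion_le _
    _ ≤ ∑' n : ℕ, ENNReal.ofReal (4 * K / δ * n ^ 2)⁻¹ := ENNReal.tsum_le_tsum hterm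
    _ = ENNReal.ofReal ((4 * K / δ)⁻¹ * (π ^ 2 / 6)) := by
        rw [← ENNReal.ofReal_tsum_of_nonneg (fun n ↦ by positivity)
          (hasSum_inv_mul_sq _).summable, (hasSum_inv_mul_sq _).tsum_eq]
    _ ≤ ENNReal.ofReal (δ / K) := by
        gcongr
        rw [inv_div, div_mul_eq_mul_div, div_le_div_iff₀ (by positivity) hK₀]
        nlinarith [mul_pos hδ₀ hK₀]

/-- Lemma A.1: for i.i.d. rewards in `[0,1]` with mean `μ ≥ ξ`, the anytime
upper confidence bound `μ̂_n + √(log(4Kn²/δ)/(2n))` falls below `ξ` at some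
sample count `n ≥ 1` with probability at most `δ/K`. -/
theorem ucb_anytime_error
    {Ω : Type*} [MeasurableSpace Ω] (P : Measure Ω) [IsProbabilityMeasure P]
    (X : ℕ → Ω → ℝ) (hXmeas : ∀ n, Measurable (X n))
    (hindep : iIndepFun X P)
    (hident : ∀ n, Measure.map (X n) P = Measure.map (X 0) P)
    (hbdd : ∀ n ω, X n ω ∈ Set.Icc (0:ℝ) 1)
    (μ : ℝ) (hmean : ∀ n, ∫ ω, X n ω ∂P = μ)
    (K : ℕ) (hK : 1 ≤ K) (δ : ℝ) (hδ : δ ∈ Set.Ioo (0:ℝ) 1)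
    (ξ : ℝ) (hξ : ξ ≤ μ) :
    P {ω | ∃ n : ℕ, 1 ≤ n ∧
        (∑ k ∈ Finset.range n, X k ω) / n
          + Real.sqrt (Real.log (4 * K * (n : ℝ) ^ 2 / δ) / (2 * n)) < ξ}
      ≤ ENNReal.ofReal (δ / K) :=
  ucb_anytime_error_general P X hXmeas hindep hbdd μ hmean K hK δ hδ ξ hξ
end

section
/- Let (X_n) be i.i.d. random variables in [0,1] with mean μ ≥ ξ, let μ̂_n be their empirical mean, and define μ̲_n = μ̂_n - sqrt(log(4Kn²/δ)/(2n)). Fix ε ∈ (0, μ - ξ) and let n₀ = (1/(Δ-ε)²)*log((4*sqrt(K/δ)/(Δ-ε)²)*log(5*sqrt(K/δ)/(Δ-ε)²)) with Δ = μ - ξ. Then E[∑_{n=1}^∞ 1{μ̲_n ≤ ξ}] ≤ n₀ + 1/(2ε²). -/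
/-!
With `a = √(K/δ)` and `c = (Δ - ε)²` the squared confidence radius after `n` samples is
`log (2an) / n`, and for `n ≥ n₀` it is at most `c`. So the lower confidence bound can only be
`≤ ξ` if the empirical mean is `≤ μ - ε`, which by Hoeffding's inequality has probability at
most `e^{-2nε²}`. Bounding the first `⌊n₀⌋` probabilities by one and the rest by the geometric
tail `∑ e^{-2nε²} = 1/(e^{2ε²} - 1) ≤ 1/(2ε²)` gives the claim.

When `n₀ < 0` every radius is already small enough, and the slack
`1/x - 1/(eˣ - 1) ≥ 1/(x + 2)` of the geometric tail absorbs `-n₀`, unless `ξ` is so far below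
`0` that the events are all empty.
-/

open Real MeasureTheory ProbabilityTheory Finset
open scoped ENNReal

lemma exp_one_mul_log_le {y : ℝ} (hy : 0 ≤ y) : exp 1 * log y ≤ y := by
  rcases hy.eq_or_lt with rfl | hy
  · simp
  simpa [exp_log hy] using exp_one_mul_le_exp (x := log y)

lemma one_div_exp_sub_one_le {x : ℝ} (hx : 0 < x) : 1 / (exp x - 1) ≤ 1 / x - 1 / (x + 2) := by
  calc 1 / (exp x - 1) ≤ 1 / (x + x ^ 2 / 2) :=
        one_div_le_one_div_of_le (by positivity) (by linarith [quadratic_le_exp_of_nonneg hx.le])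
    _ = 1 / x - 1 / (x + 2) := by field_simp; ring

lemma tsum_exp_neg_mul_succ {x : ℝ} (hx : 0 < x) :
    ∑' n : ℕ, ENNReal.ofReal (exp (-(x * (n + 1)))) = ENNReal.ofReal (1 / (exp x - 1)) := by
  have hr : exp (-x) < 1 := exp_lt_one_iff.2 (neg_neg_of_pos hx)
  have hterm : ∀ n : ℕ, exp (-(x * (n + 1))) = exp (-x) * exp (-x) ^ n := fun n => by
    rw [← exp_nat_mul, ← exp_add]; ring_nf
  simp_rw [hterm]
  rw [← ENNReal.ofReal_tsum_of_nonneg (fun n => by positivity)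
    ((summable_geometric_of_lt_one (exp_pos _).le hr).mul_left _), tsum_mul_left,
    tsum_geometric_of_lt_one (exp_pos _).le hr]
  congr 1
  have := exp_pos x
  rw [exp_neg]
  field_simp

lemma tsum_le_add_of_le_exp_neg {p : ℕ → ℝ≥0∞} {n₀ ε : ℝ} (hn₀ : 0 ≤ n₀) (hε : 0 < ε)
    (hp₁ : ∀ n, p n ≤ 1)
    (hp : ∀ n : ℕ, n₀ ≤ n + 1 → p n ≤ ENNReal.ofReal (exp (-(2 * ε ^ 2 * (n + 1))))) :
    ∑' n, p n ≤ ENNReal.ofReal (n₀ + 1 / (2 * ε ^ 2)) := by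
  set N := ⌊n₀⌋₊
  have hx : 0 < 2 * ε ^ 2 := by positivity
  have hsplit : ∀ n, p n ≤ (if n < N then 1 else 0)
      + ENNReal.ofReal (exp (-(2 * ε ^ 2 * (n + 1)))) := by
    intro n
    split_ifs with hn
    · exact (hp₁ n).trans le_self_add
    · refine (hp n ?_).trans le_add_self
      have : (N : ℝ) ≤ n := by exact_mod_cast not_lt.1 hn
      linarith [Nat.lt_floor_add_one n₀]
  have hcount : ∑' n : ℕ, (if n < N then (1 : ℝ≥0∞) else 0) = N := by
    rw [tsum_eq_sum (s := range N) (fun n hn => if_neg (by simpa using hn))]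
    simp [Finset.sum_ite_of_true (fun n hn => Finset.mem_range.1 hn)]
  calc ∑' n, p n ≤ ∑' n : ℕ, ((if n < N then 1 else 0)
        + ENNReal.ofReal (exp (-(2 * ε ^ 2 * (n + 1))))) := ENNReal.tsum_le_tsum hsplit
    _ = N + ENNReal.ofReal (1 / (exp (2 * ε ^ 2) - 1)) := by
        rw [ENNReal.tsum_add, hcount, tsum_exp_neg_mul_succ hx]
    _ ≤ ENNReal.ofReal n₀ + ENNReal.ofReal (1 / (2 * ε ^ 2)) := by
        refine add_le_add ?_ (ENNReal.ofReal_le_ofReal ?_)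
        · rw [← ENNReal.ofReal_natCast]
          exact ENNReal.ofReal_le_ofReal (Nat.floor_le hn₀)
        · linarith [one_div_exp_sub_one_le hx, one_div_pos.2 (show 0 < 2 * ε ^ 2 + 2 by positivity)]
    _ = ENNReal.ofReal (n₀ + 1 / (2 * ε ^ 2)) := (ENNReal.ofReal_add hn₀ (by positivity)).symm

/-- `n₀` of the paper, for `a = √(K/δ)` and `c = (Δ - ε)²`. -/
noncomputable def burnIn (a c : ℝ) : ℝ := 1 / c * log (4 * a / c * log (5 * a / c))

lemma log_mul_le_mul_of_le_exp_one_mul {b c t : ℝ} (hb : 0 < b) (ht : 0 < t)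
    (h : b ≤ exp 1 * c) : log (b * t) ≤ t * c := by
  refine le_of_mul_le_mul_left ?_ (exp_pos 1)
  calc exp 1 * log (b * t) ≤ b * t := exp_one_mul_log_le (mul_pos hb ht).le
    _ ≤ exp 1 * c * t := by gcongr
    _ = exp 1 * (t * c) := by ring

lemma log_mul_le_mul_of_le {b c t₀ t : ℝ} (hb : 0 < b) (ht₀ : 0 < t₀) (hct₀ : 1 ≤ t₀ * c)
    (h₀ : log (b * t₀) ≤ t₀ * c) (ht : t₀ ≤ t) : log (b * t) ≤ t * c := by
  have ht_pos : 0 < t := ht₀.trans_le ht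
  have hsplit : log (b * t) = log (b * t₀) + log (t / t₀) := by
    rw [← log_mul (by positivity) (by positivity)]
    congr 1
    field_simp
  have hratio : t / t₀ - 1 ≤ (t - t₀) * c := by
    rw [div_sub_one ht₀.ne', div_le_iff₀ ht₀]
    nlinarith
  linarith [log_le_sub_one_of_pos (show 0 < t / t₀ by positivity)]

/-- If `2a ≤ e c` every `t > 0` works; otherwise `t ↦ t c - log (2at)` increases past `1/c`
and is nonnegative at `burnIn a c`. -/
lemma log_two_mul_le_of_burnIn_le {a c t : ℝ} (ha : 0 < a) (hc : 0 < c) (ht : 0 < t)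
    (h : burnIn a c ≤ t) : log (2 * a * t) ≤ t * c := by
  rcases le_or_gt (2 * a) (exp 1 * c) with hsmall | hlarge
  · exact log_mul_le_mul_of_le_exp_one_mul (by positivity) ht hsmall
  set A := a / c with hA
  have hA_gt : exp 1 < 2 * A := by rwa [hA, mul_div_assoc', lt_div_iff₀ hc]
  have hlog5 : 1 < log (5 * A) := by
    rw [lt_log_iff_exp_lt (by positivity)]; linarith [exp_pos 1]
  have hp : exp 1 < 4 * A * log (5 * A) := by nlinarith [exp_pos 1]
  have hL : 1 < log (4 * A * log (5 * A)) := by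
    rw [lt_log_iff_exp_lt (by positivity)]; exact hp
  have hburn_c : burnIn a c * c = log (4 * A * log (5 * A)) := by
    rw [burnIn, hA, mul_div_assoc, mul_div_assoc]; field_simp
  have hburn_pos : 0 < burnIn a c :=
    lt_of_mul_lt_mul_right (by rw [hburn_c, zero_mul]; linarith) hc.le
  refine log_mul_le_mul_of_le (by positivity) hburn_pos (by linarith) ?_ h
  rw [hburn_c]
  refine log_le_log (by positivity) ?_
  have hL_le : log (4 * A * log (5 * A)) ≤ 2 * log (5 * A) := by
    calc log (4 * A * log (5 * A)) ≤ log ((5 * A) ^ 2) := by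
          refine log_le_log (by positivity) ?_
          nlinarith [log_le_sub_one_of_pos (show 0 < 5 * A by positivity)]
      _ = 2 * log (5 * A) := by rw [log_pow]; norm_num
  calc 2 * a * burnIn a c = 2 * A * (burnIn a c * c) := by rw [hA]; field_simp
    _ ≤ 2 * A * (2 * log (5 * A)) := by rw [hburn_c]; gcongr
    _ = 4 * A * log (5 * A) := by ring

lemma one_third_le_log_seven_fifths : 1 / 3 ≤ log (7 / 5) := by
  rw [le_log_iff_exp_le (by norm_num)]
  by_contra! h
  have h3 : (7 / 5 : ℝ) ^ 3 < exp (1 / 3) ^ 3 := pow_lt_pow_left₀ h (by norm_num) (by norm_num)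
  rw [← exp_nat_mul] at h3
  norm_num at h3
  linarith [exp_one_lt_d9]

lemma seven_fifths_le_of_sqrt_le {a c : ℝ} (ha : 1 ≤ a) (hc : 0 < c)
    (h : √c ≤ 1 + √(2 * a / exp 1)) : 7 / 5 ≤ 5 * a / c := by
  set v := √(2 * a / exp 1)
  have hv : 0 ≤ v := sqrt_nonneg _
  have hv2 : v ^ 2 ≤ 0.7358 * a := by
    rw [sq_sqrt (by positivity), div_le_iff₀ (exp_pos 1)]
    nlinarith [exp_one_gt_d9]
  have hc2 : c ≤ (1 + v) ^ 2 := by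
    rw [← sq_sqrt hc.le]; exact pow_le_pow_left₀ (sqrt_nonneg c) h 2
  rw [le_div_iff₀ hc]
  nlinarith [sq_nonneg (v - 0.86)]

/-- The hypothesis `h` forces `5a/c ∈ [7/5, 2)`, hence `-burnIn a c ≤ 1/c ≤ 2/5`. -/
lemma neg_burnIn_le {a c ε : ℝ} (ha : 1 ≤ a) (hc : 0 < c) (hε : 0 ≤ ε) (hneg : burnIn a c < 0)
    (h : √c + ε ≤ 1 + √(2 * a / exp 1)) : -burnIn a c ≤ 1 / (2 * ε ^ 2 + 2) := by
  set s := 5 * a / c with hs_def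
  have hs : 7 / 5 ≤ s := seven_fifths_le_of_sqrt_le ha hc (by linarith)
  have hlog_s : 1 / 3 ≤ log s :=
    one_third_le_log_seven_fifths.trans (log_le_log (by norm_num) hs)
  have hburn : burnIn a c = 1 / c * log (4 / 5 * s * log s) := by
    rw [burnIn, hs_def]; congr 3; ring
  have hp_lt : 4 / 5 * s * log s < 1 := by
    have hL : log (4 / 5 * s * log s) < 0 := by
      rw [hburn] at hneg; exact neg_of_mul_neg_right hneg (by positivity)
    exact (log_neg_iff (by positivity)).1 hL
  have hs2 : s < 2 := by
    by_contra! hs2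
    have := log_le_log (by norm_num) hs2
    nlinarith [log_two_gt_d9]
  have hL : -1 ≤ log (4 / 5 * s * log s) := by
    have hsl : 7 / 15 ≤ s * log s := by nlinarith
    rw [le_log_iff_exp_le (by positivity), exp_neg, inv_le_iff_one_le_mul₀ (exp_pos 1)]
    nlinarith [exp_one_gt_d9]
  have hc_gt : 5 / 2 < c := by
    have : 5 * a = s * c := by rw [hs_def]; field_simp
    nlinarith
  have hε_le : ε ≤ 1 / 2 := by
    set v := √(2 * a / exp 1)
    set u := √c
    have hu2 : u ^ 2 = c := sq_sqrt hc.le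
    have hv2 : v ^ 2 ≤ 0.3 * u ^ 2 := by
      rw [sq_sqrt (by positivity), hu2, div_le_iff₀ (exp_pos 1)]
      have : 5 * a = s * c := by rw [hs_def]; field_simp
      nlinarith [exp_one_gt_d9]
    have hu : 0 ≤ u := sqrt_nonneg c
    have hv : 0 ≤ v := sqrt_nonneg _
    have hvu : v ≤ 0.548 * u := by nlinarith
    nlinarith
  rw [hburn, neg_mul_eq_mul_neg]
  calc 1 / c * -log (4 / 5 * s * log s) ≤ 1 / c * 1 := by gcongr; linarith
    _ ≤ 2 / 5 := by rw [mul_one, div_le_div_iff₀ hc (by norm_num)]; linarith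
    _ ≤ 1 / (2 * ε ^ 2 + 2) := by
      rw [div_le_div_iff₀ (by norm_num) (by positivity)]; nlinarith

lemma tsum_le_of_burnIn_neg {p : ℕ → ℝ≥0∞} {a c ε : ℝ} (ha : 1 ≤ a) (hc : 0 < c) (hε : 0 < ε)
    (hneg : burnIn a c < 0) (h : √c + ε ≤ 1 + √(2 * a / exp 1))
    (hp : ∀ n : ℕ, p n ≤ ENNReal.ofReal (exp (-(2 * ε ^ 2 * (n + 1))))) :
    ∑' n, p n ≤ ENNReal.ofReal (burnIn a c + 1 / (2 * ε ^ 2)) := by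
  have hx : 0 < 2 * ε ^ 2 := by positivity
  calc ∑' n, p n ≤ ∑' n : ℕ, ENNReal.ofReal (exp (-(2 * ε ^ 2 * (n + 1)))) :=
        ENNReal.tsum_le_tsum hp
    _ = ENNReal.ofReal (1 / (exp (2 * ε ^ 2) - 1)) := tsum_exp_neg_mul_succ hx
    _ ≤ ENNReal.ofReal (burnIn a c + 1 / (2 * ε ^ 2)) := ENNReal.ofReal_le_ofReal <| by
        linarith [one_div_exp_sub_one_le hx, neg_burnIn_le ha hc hε.le hneg h]

lemma lintegral_tsum_indicator_one {Ω : Type*} [MeasurableSpace Ω] {P : Measure Ω}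
    {s : ℕ → Set Ω} (hs : ∀ n, MeasurableSet (s n)) :
    ∫⁻ ω, ∑' n, (s n).indicator (fun _ => (1 : ℝ≥0∞)) ω ∂P = ∑' n, P (s n) := by
  rw [lintegral_tsum fun n => (measurable_const.indicator (hs n)).aemeasurable]
  simp_rw [lintegral_indicator_const (hs _), one_mul]

section Hoeffding
variable {Ω : Type*} [MeasurableSpace Ω] {P : Measure Ω} [IsProbabilityMeasure P]
  {X : ℕ → Ω → ℝ} {μ : ℝ}

lemma measure_sum_range_le_mul_sub_le (hXmeas : ∀ n, Measurable (X n))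
    (hindep : iIndepFun X P) (hbdd : ∀ n ω, X n ω ∈ Set.Icc (0 : ℝ) 1)
    (hmean : ∀ n, ∫ ω, X n ω ∂P = μ) {ε : ℝ} (hε : 0 ≤ ε) (t : ℕ) :
    P {ω | ∑ k ∈ range t, X k ω ≤ t * (μ - ε)} ≤ ENNReal.ofReal (exp (-(2 * ε ^ 2 * t))) := by
  have hsubG : ∀ k < t, HasSubgaussianMGF (fun ω => -(X k ω - μ)) ((‖(1 : ℝ) - 0‖₊ / 2) ^ 2) P :=
    fun k _ => by
      have := (hasSubgaussianMGF_of_mem_Icc (μ := P) (hXmeas k).aemeasurable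
        (ae_of_all _ (hbdd k))).neg
      rwa [hmean k] at this
  have hindep' : iIndepFun (fun k ω => -(X k ω - μ)) P :=
    hindep.comp (fun _ x => -(x - μ)) (fun _ => by fun_prop)
  have hset : {ω | ∑ k ∈ range t, X k ω ≤ t * (μ - ε)}
      = {ω | t * ε ≤ ∑ k ∈ range t, -(X k ω - μ)} := by
    ext ω
    simp only [Set.mem_ofPred_eq, sum_neg_distrib, sum_sub_distrib, sum_const, card_range,
      nsmul_eq_mul]
    constructor <;> intro h <;> linarith
  have hHoeffding := HasSubgaussianMGF.measure_sum_range_ge_le_of_iIndepFun hindep' hsubG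
    (show 0 ≤ (t : ℝ) * ε by positivity)
  rw [hset, ← ofReal_measureReal]
  refine ENNReal.ofReal_le_ofReal (hHoeffding.trans_eq ?_)
  rcases eq_or_ne (t : ℝ) 0 with ht | ht
  · simp [ht]
  · norm_num
    field_simp
    ring

end Hoeffding

lemma log_four_mul_sq_div {K δ : ℝ} (hK : 0 ≤ K) (hδ : 0 < δ) (t : ℝ) :
    log (4 * K * t ^ 2 / δ) = 2 * log (2 * √(K / δ) * t) := by
  have hsq : 4 * K * t ^ 2 / δ = (2 * √(K / δ) * t) ^ 2 := by
    rw [mul_pow, mul_pow, sq_sqrt (by positivity)]; ring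
  rw [hsq, log_pow, Nat.cast_ofNat]

section LowerConfidenceBound
variable {Ω : Type*} {X : ℕ → Ω → ℝ} {K : ℕ} {δ ξ : ℝ}

variable (X K δ ξ) in
def lcbEvent (n : ℕ) : Set Ω :=
  {ω | (∑ k ∈ range (n + 1), X k ω) / (n + 1)
    - √(log (4 * K * ((n : ℝ) + 1) ^ 2 / δ) / (2 * ((n : ℝ) + 1))) ≤ ξ}

lemma measurableSet_lcbEvent [MeasurableSpace Ω] (hX : ∀ n, Measurable (X n)) (n : ℕ) :
    MeasurableSet (lcbEvent X K δ ξ n) :=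
  measurableSet_le (by fun_prop) measurable_const

lemma lcbEvent_subset_of_log_le {μ ε : ℝ} (hδ : 0 < δ) (hgap : 0 ≤ μ - ξ - ε) {n : ℕ}
    (hlog : log (2 * √(K / δ) * (n + 1)) ≤ (n + 1) * (μ - ξ - ε) ^ 2) :
    lcbEvent X K δ ξ n ⊆ {ω | ∑ k ∈ range (n + 1), X k ω ≤ ((n + 1 : ℕ) : ℝ) * (μ - ε)} := by
  intro ω hω
  have hr : √(log (4 * K * ((n : ℝ) + 1) ^ 2 / δ) / (2 * ((n : ℝ) + 1))) ≤ μ - ξ - ε := by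
    rw [← sqrt_sq hgap, log_four_mul_sq_div (Nat.cast_nonneg K) hδ]
    refine sqrt_le_sqrt ?_
    rw [div_le_iff₀ (by positivity)]
    linarith
  simp only [lcbEvent, Set.mem_ofPred_eq, Nat.cast_succ] at hω ⊢
  rw [← div_le_iff₀' (by positivity)]
  linarith

lemma neg_le_sqrt_of_mem_lcbEvent (hX : ∀ k ω, 0 ≤ X k ω) (hδ : 0 < δ) {n : ℕ} {ω : Ω}
    (hω : ω ∈ lcbEvent X K δ ξ n) : -ξ ≤ √(2 * √(K / δ) / exp 1) := by
  have hmean : 0 ≤ (∑ k ∈ range (n + 1), X k ω) / (n + 1) :=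
    div_nonneg (sum_nonneg fun k _ => hX k ω) (by positivity)
  have hr : √(log (4 * K * ((n : ℝ) + 1) ^ 2 / δ) / (2 * ((n : ℝ) + 1)))
      ≤ √(2 * √(K / δ) / exp 1) := by
    rw [log_four_mul_sq_div (Nat.cast_nonneg K) hδ]
    refine sqrt_le_sqrt ?_
    rw [div_le_div_iff₀ (by positivity) (exp_pos 1)]
    nlinarith [exp_one_mul_log_le (show 0 ≤ 2 * √(K / δ) * (n + 1) by positivity)]
  simp only [lcbEvent, Set.mem_ofPred_eq] at hω
  linarith

end LowerConfidenceBound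

theorem expected_lcb_below_threshold_general
    {Ω : Type*} [MeasurableSpace Ω] (P : Measure Ω) [IsProbabilityMeasure P]
    (X : ℕ → Ω → ℝ) (hXmeas : ∀ n, Measurable (X n))
    (hindep : iIndepFun X P)
    (hbdd : ∀ n ω, X n ω ∈ Set.Icc (0:ℝ) 1)
    (μ : ℝ) (hmean : ∀ n, ∫ ω, X n ω ∂P = μ)
    (K : ℕ) (hK : 1 ≤ K) (δ : ℝ) (hδ : δ ∈ Set.Ioo (0:ℝ) 1)
    (ξ : ℝ) (ε : ℝ) (hε : ε ∈ Set.Ioo (0:ℝ) (μ - ξ))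
    (n₀ : ℝ)
    (hn₀ : n₀ = (1 / ((μ - ξ) - ε) ^ 2) *
        Real.log ((4 * Real.sqrt ((K : ℝ) / δ) / ((μ - ξ) - ε) ^ 2)
          * Real.log (5 * Real.sqrt ((K : ℝ) / δ) / ((μ - ξ) - ε) ^ 2))) :
    (∫⁻ ω, ∑' n : ℕ,
        Set.indicator
          {ω' | (∑ k ∈ Finset.range (n + 1), X k ω') / (n + 1)
              - Real.sqrt (Real.log (4 * K * ((n : ℝ) + 1) ^ 2 / δ)
                  / (2 * ((n : ℝ) + 1))) ≤ ξ}
          (fun _ => (1 : ℝ≥0∞)) ω ∂P)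
      ≤ ENNReal.ofReal (n₀ + 1 / (2 * ε ^ 2)) := by
  obtain ⟨hε, hεΔ⟩ := hε
  set a := √((K : ℝ) / δ)
  set c := (μ - ξ - ε) ^ 2
  replace hn₀ : n₀ = burnIn a c := hn₀
  have ha : 1 ≤ a := one_le_sqrt.2 ((one_le_div hδ.1).2 (hδ.2.le.trans (Nat.one_le_cast.2 hK)))
  have hc : 0 < c := pow_pos (by linarith) 2
  have hP : ∀ n : ℕ, n₀ ≤ n + 1 →
      P (lcbEvent X K δ ξ n) ≤ ENNReal.ofReal (exp (-(2 * ε ^ 2 * (n + 1)))) := fun n hn => by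
    refine (measure_mono (lcbEvent_subset_of_log_le hδ.1 (by linarith)
      (log_two_mul_le_of_burnIn_le (by linarith) hc (by positivity) (hn₀ ▸ hn)))).trans ?_
    simpa using measure_sum_range_le_mul_sub_le hXmeas hindep hbdd hmean hε.le (n + 1)
  change ∫⁻ ω, ∑' n, (lcbEvent X K δ ξ n).indicator (fun _ => 1) ω ∂P ≤ _
  rw [lintegral_tsum_indicator_one (measurableSet_lcbEvent hXmeas)]
  rcases le_or_gt 0 n₀ with h0 | h0
  · exact tsum_le_add_of_le_exp_neg h0 hε (fun n => prob_le_one) hP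
  by_cases hΔ : μ - ξ ≤ 1 + √(2 * a / exp 1)
  · refine hn₀ ▸ tsum_le_of_burnIn_neg ha hc hε (hn₀ ▸ h0) ?_
      fun n => hP n (h0.le.trans (by positivity))
    rw [sqrt_sq (by linarith)]
    linarith
  · have hμ : μ ≤ 1 := by
      rw [← hmean 0]
      simpa using integral_mono (μ := P) (Integrable.of_mem_Icc 0 1 (hXmeas 0).aemeasurable
        (ae_of_all _ (hbdd 0))) (integrable_const 1) fun ω => (hbdd 0 ω).2
    have hempty : ∀ n, lcbEvent X K δ ξ n = ∅ := fun n =>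
      Set.eq_empty_of_forall_notMem fun ω hω =>
        hΔ (by linarith [neg_le_sqrt_of_mem_lcbEvent (fun k ω => (hbdd k ω).1) hδ.1 hω])
    simp [hempty]

/-- Lemma B.2: for a good arm (mean `μ ≥ ξ`), the expected number of sample
counts `n` at which the lower confidence bound is at most `ξ` is bounded by
`n₀ + 1/(2ε²)`. -/
theorem expected_lcb_below_threshold
    {Ω : Type*} [MeasurableSpace Ω] (P : Measure Ω) [IsProbabilityMeasure P]
    (X : ℕ → Ω → ℝ) (hXmeas : ∀ n, Measurable (X n))
    (hindep : iIndepFun X P)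
    (hident : ∀ n, Measure.map (X n) P = Measure.map (X 0) P)
    (hbdd : ∀ n ω, X n ω ∈ Set.Icc (0:ℝ) 1)
    (μ : ℝ) (hmean : ∀ n, ∫ ω, X n ω ∂P = μ)
    (K : ℕ) (hK : 1 ≤ K) (δ : ℝ) (hδ : δ ∈ Set.Ioo (0:ℝ) 1)
    (ξ : ℝ) (hξ : ξ ≤ μ) (ε : ℝ) (hε : ε ∈ Set.Ioo (0:ℝ) (μ - ξ))
    (n₀ : ℝ)
    (hn₀ : n₀ = (1 / ((μ - ξ) - ε) ^ 2) *
        Real.log ((4 * Real.sqrt ((K : ℝ) / δ) / ((μ - ξ) - ε) ^ 2)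
          * Real.log (5 * Real.sqrt ((K : ℝ) / δ) / ((μ - ξ) - ε) ^ 2))) :
    (∫⁻ ω, ∑' n : ℕ,
        Set.indicator
          {ω' | (∑ k ∈ Finset.range (n + 1), X k ω') / (n + 1)
              - Real.sqrt (Real.log (4 * K * ((n : ℝ) + 1) ^ 2 / δ)
                  / (2 * ((n : ℝ) + 1))) ≤ ξ}
          (fun _ => (1 : ℝ≥0∞)) ω ∂P)
      ≤ ENNReal.ofReal (n₀ + 1 / (2 * ε ^ 2)) :=
  expected_lcb_below_threshold_general P X hXmeas hindep hbdd μ hmean K hK δ hδ ξ ε hε n₀ hn₀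
end

section
/- Let K ≥ 2 be an integer, ε > 0, and suppose n* ≥ (log√K)/c + 2.05 where c = (min_i Δ_i - ε)² with ε < min_i Δ_i. Then K * e^{-2ε²(n* - 2)} / (e^{2ε²/K} - 1) ≤ K^{2 - ε²/c} / (2ε²). -/
/-- Lemma B.4 estimate: for an integer `K ≥ 2`, `ε > 0`, `c = (Δmin - ε)²` with
`ε < Δmin`, and `n* ≥ log √K / c + 2.05`,
`K e^{-2ε²(n*-2)} / (e^{2ε²/K} - 1) ≤ K^{2 - ε²/c} / (2ε²)`. -/
theorem tail_rounds_bound (K : ℕ) (hK : 2 ≤ K) (ε Δmin : ℝ) (hε : 0 < ε)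
    (hΔ : ε < Δmin) (c : ℝ) (hc : c = (Δmin - ε) ^ 2)
    (nstar : ℝ) (hn : Real.log (Real.sqrt (K : ℝ)) / c + 2.05 ≤ nstar) :
    (K : ℝ) * Real.exp (-2 * ε ^ 2 * (nstar - 2))
        / (Real.exp (2 * ε ^ 2 / (K : ℝ)) - 1)
      ≤ (K : ℝ) ^ (2 - ε ^ 2 / c) / (2 * ε ^ 2) := by
  have hK0 : (0:ℝ) < K := by exact_mod_cast (by omega : 0 < K)
  have hK1 : (1:ℝ) ≤ K := by exact_mod_cast (by omega : 1 ≤ K)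
  have hc0 : 0 < c := by
    rw [hc]; have : 0 < Δmin - ε := by linarith
    positivity
  have hε2 : (0:ℝ) < 2 * ε ^ 2 := by positivity
  have hx : (0:ℝ) < 2 * ε ^ 2 / K := by positivity
  have hden : 2 * ε ^ 2 / K ≤ Real.exp (2 * ε ^ 2 / K) - 1 := by
    have := Real.add_one_le_exp (2 * ε ^ 2 / (K:ℝ)); linarith
  have hdpos : 0 < Real.exp (2 * ε ^ 2 / K) - 1 := lt_of_lt_of_le hx hden
  have hlog : 0 ≤ Real.log K := Real.log_nonneg hK1
  have hsq : Real.log (Real.sqrt (K:ℝ)) = Real.log K / 2 := Real.log_sqrt hK0.le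
  rw [hsq] at hn
  have h1 : Real.log K / 2 / c ≤ nstar - 2 := by linarith
  have h2 : ε ^ 2 / c * Real.log K ≤ 2 * ε ^ 2 * (nstar - 2) := by
    have := (div_le_iff₀ hc0).mp h1
    rw [div_mul_eq_mul_div, div_le_iff₀ hc0]
    nlinarith
  have key : (K:ℝ) ^ (2:ℕ) * Real.exp (-2 * ε ^ 2 * (nstar - 2))
      ≤ (K : ℝ) ^ (2 - ε ^ 2 / c) := by
    rw [Real.rpow_def_of_pos hK0]
    have : ((K:ℝ) ^ (2:ℕ)) = Real.exp (2 * Real.log K) := by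
      rw [← Real.exp_log hK0]
      rw [← Real.exp_nat_mul]
      norm_num
    rw [this, ← Real.exp_add, Real.exp_le_exp]
    nlinarith
  calc (K : ℝ) * Real.exp (-2 * ε ^ 2 * (nstar - 2))
        / (Real.exp (2 * ε ^ 2 / (K:ℝ)) - 1)
      ≤ (K : ℝ) * Real.exp (-2 * ε ^ 2 * (nstar - 2)) / (2 * ε ^ 2 / K) := by
        gcongr
    _ = (K : ℝ) ^ (2:ℕ) * Real.exp (-2 * ε ^ 2 * (nstar - 2)) / (2 * ε ^ 2) := by
        field_simp
    _ ≤ (K : ℝ) ^ (2 - ε ^ 2 / c) / (2 * ε ^ 2) := by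
        gcongr
end

section
/- Let (X_n) be i.i.d. random variables in [0,1] with mean μ, and let μ̂_n be the empirical mean. Fix μ_λ and ε > 0 with μ < μ_λ - ε, write Δ = μ_λ - μ > ε, and assume Δ - 2ε > 0. Then for any T ≥ 1, ∑_{n=1}^T P[μ̂_n + sqrt(log T/(2n)) ≥ μ_λ - ε] ≤ log T / (2(Δ - 2ε)²) + 1/(2ε²). -/
open MeasureTheory ProbabilityTheory

section Auxiliary
open Real


-- analytic Hoeffding lemma: 1 - p + p e^t ≤ exp (t p + t²/8) for p ∈ [0,1]
lemma hoeffding_aux {p : ℝ} (hp0 : 0 ≤ p) (hp1 : p ≤ 1) (t : ℝ) :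
    1 - p + p * Real.exp t ≤ Real.exp (t * p + t ^ 2 / 8) := by
  set g : ℝ → ℝ := fun s => 1 - p + p * Real.exp s with hg
  have hgpos : ∀ s, 0 < g s := by
    intro s
    have h := Real.exp_pos s
    rcases lt_or_eq_of_le hp1 with h1 | h1
    · have : 0 ≤ p * Real.exp s := by positivity
      simp only [hg]; nlinarith
    · simp only [hg, ← h1]; nlinarith
  set f : ℝ → ℝ := fun s => s * p + s ^ 2 / 8 - Real.log (g s) with hf
  set f' : ℝ → ℝ := fun s => p + s / 4 - p * Real.exp s / g s with hf'
  have hgd : ∀ s, HasDerivAt g (p * Real.exp s) s := by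
    intro s
    exact ((Real.hasDerivAt_exp s).const_mul p).const_add (1 - p)
  have hfd : ∀ s, HasDerivAt f (f' s) s := by
    intro s
    have hlog : HasDerivAt (fun u => Real.log (g u)) (p * Real.exp s / g s) s := by
      exact ((Real.hasDerivAt_log (hgpos s).ne').comp s (hgd s)).congr_deriv (by ring)
    have h1 : HasDerivAt (fun u : ℝ => u * p + u ^ 2 / 8) (p + s / 4) s := by
      have := ((hasDerivAt_id s).mul_const p).add
        (((hasDerivAt_pow 2 s)).div_const 8)
      exact this.congr_deriv (by norm_num; ring)
    exact h1.sub hlog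
  have hf'd : ∀ s, HasDerivAt f'
      (1 / 4 - (p * Real.exp s * g s - p * Real.exp s * (p * Real.exp s)) / (g s) ^ 2) s := by
    intro s
    have hq : HasDerivAt (fun u => p * Real.exp u / g u)
        ((p * Real.exp s * g s - p * Real.exp s * (p * Real.exp s)) / (g s) ^ 2) s :=
      (((Real.hasDerivAt_exp s).const_mul p)).div (hgd s) (hgpos s).ne'
    have h1 : HasDerivAt (fun u : ℝ => p + u / 4) (1 / 4) s := by
      simpa using ((hasDerivAt_id s).div_const 4).const_add p
    exact h1.sub hq
  have hf'' : ∀ s, 0 ≤ 1 / 4 - (p * Real.exp s * g s - p * Real.exp s * (p * Real.exp s)) / (g s) ^ 2 := by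
    intro s
    have hD := hgpos s
    rw [sub_nonneg, div_le_iff₀ (by positivity)]
    have hE := Real.exp_pos s
    have : g s = (1 - p) + p * Real.exp s := rfl
    nlinarith [sq_nonneg ((1 - p) - p * Real.exp s), mul_pos hE hE]
  have hf'mono : Monotone f' := by
    have hdiff : Differentiable ℝ f' := fun s => (hf'd s).differentiableAt
    apply monotone_of_deriv_nonneg hdiff
    intro s
    rw [(hf'd s).deriv]
    exact hf'' s
  have hf'0 : f' 0 = 0 := by
    simp only [hf', hg]
    rw [Real.exp_zero]
    field_simp
    ring
  have hf0 : f 0 = 0 := by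
    simp only [hf, hg]
    rw [Real.exp_zero]
    norm_num
  have hfnonneg : ∀ s, 0 ≤ f s := by
    intro s
    have hdiff : Differentiable ℝ f := fun u => (hfd u).differentiableAt
    rcases le_or_gt 0 s with hs | hs
    · have hmono : MonotoneOn f (Set.Ici 0) := by
        apply monotoneOn_of_deriv_nonneg (convex_Ici 0) hdiff.continuous.continuousOn
          hdiff.differentiableOn
        intro x hx
        rw [interior_Ici] at hx
        rw [(hfd x).deriv]
        have := hf'mono (le_of_lt hx : (0:ℝ) ≤ x)
        rw [hf'0] at this; linarith
      have := hmono (Set.self_mem_Ici) (Set.mem_Ici.2 hs) hs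
      rw [hf0] at this; linarith
    · have hanti : AntitoneOn f (Set.Iic 0) := by
        apply antitoneOn_of_deriv_nonpos (convex_Iic 0) hdiff.continuous.continuousOn
          hdiff.differentiableOn
        intro x hx
        rw [interior_Iic] at hx
        rw [(hfd x).deriv]
        have := hf'mono (le_of_lt hx : x ≤ (0:ℝ))
        rw [hf'0] at this; linarith
      have := hanti (Set.mem_Iic.2 hs.le) (Set.self_mem_Iic) hs.le
      rw [hf0] at this; linarith
  have h := hfnonneg t
  simp only [hf] at h
  have hlog : Real.log (g t) ≤ t * p + t ^ 2 / 8 := by linarith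
  calc 1 - p + p * Real.exp t = g t := rfl
    _ = Real.exp (Real.log (g t)) := (Real.exp_log (hgpos t)).symm
    _ ≤ Real.exp (t * p + t ^ 2 / 8) := Real.exp_le_exp.2 hlog

lemma integrable_exp_of_bdd {Ω : Type*} [MeasurableSpace Ω] (P : Measure Ω)
    [IsProbabilityMeasure P] {Y : Ω → ℝ} (hY : Measurable Y) {C : ℝ}
    (hC : ∀ ω, |Y ω| ≤ C) (t : ℝ) :
    Integrable (fun ω => Real.exp (t * Y ω)) P := by
  apply Integrable.mono' (integrable_const (Real.exp (|t| * C)))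
    ((hY.const_mul t).exp.aestronglyMeasurable)
  filter_upwards with ω
  rw [Real.norm_eq_abs, Real.abs_exp, Real.exp_le_exp]
  calc t * Y ω ≤ |t * Y ω| := le_abs_self _
    _ = |t| * |Y ω| := abs_mul t (Y ω)
    _ ≤ |t| * C := by
        apply mul_le_mul_of_nonneg_left (hC ω) (abs_nonneg t)

lemma mgf_centered_le {Ω : Type*} [MeasurableSpace Ω] (P : Measure Ω)
    [IsProbabilityMeasure P] {Y : Ω → ℝ} (hY : Measurable Y)
    (hb : ∀ ω, Y ω ∈ Set.Icc (0:ℝ) 1) {μ : ℝ} (hmean : ∫ ω, Y ω ∂P = μ) (t : ℝ) :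
    mgf (fun ω => Y ω - μ) P t ≤ Real.exp (t ^ 2 / 8) := by
  have hYint : Integrable Y P := by
    apply Integrable.mono' (integrable_const 1) hY.aestronglyMeasurable
    filter_upwards with ω
    rw [Real.norm_eq_abs, abs_le]; exact ⟨by linarith [(hb ω).1], (hb ω).2⟩
  have hμ0 : 0 ≤ μ := by
    rw [← hmean]; exact integral_nonneg fun ω => (hb ω).1
  have hμ1 : μ ≤ 1 := by
    rw [← hmean]
    calc ∫ ω, Y ω ∂P ≤ ∫ _, (1:ℝ) ∂P := integral_mono hYint (integrable_const 1) fun ω => (hb ω).2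
      _ = 1 := by simp
  have hint : Integrable (fun ω => Real.exp (t * Y ω)) P :=
    integrable_exp_of_bdd P hY (fun ω => by
      rw [abs_le]; exact ⟨by linarith [(hb ω).1], (hb ω).2⟩) t
  -- pointwise convexity bound
  have hptw : ∀ ω, Real.exp (t * Y ω) ≤ 1 - Y ω + Y ω * Real.exp t := by
    intro ω
    have hx := hb ω
    have := convexOn_exp.2 (Set.mem_univ (0:ℝ)) (Set.mem_univ t)
      (by linarith [hx.2] : (0:ℝ) ≤ 1 - Y ω) hx.1 (by ring)
    simpa [smul_eq_mul, mul_comm] using this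
  have hI : ∫ ω, Real.exp (t * Y ω) ∂P ≤ 1 - μ + μ * Real.exp t := by
    have hrhs : Integrable (fun ω => 1 - Y ω + Y ω * Real.exp t) P :=
      ((integrable_const 1).sub hYint).add (hYint.mul_const _)
    calc ∫ ω, Real.exp (t * Y ω) ∂P ≤ ∫ ω, (1 - Y ω + Y ω * Real.exp t) ∂P :=
          integral_mono hint hrhs hptw
      _ = 1 - μ + μ * Real.exp t := by
          have hB : Integrable (fun ω => Y ω * Real.exp t) P := hYint.mul_const _
          have hA : Integrable (fun ω => 1 - Y ω) P := (integrable_const 1).sub hYint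
          have h1 : Integrable (fun _ : Ω => (1:ℝ)) P := integrable_const 1
          rw [integral_add hA hB, integral_sub h1 hYint, integral_mul_const, hmean,
            integral_const]
          simp
  have hmgf : mgf (fun ω => Y ω - μ) P t = Real.exp (-(t * μ)) * ∫ ω, Real.exp (t * Y ω) ∂P := by
    rw [mgf, ← integral_const_mul]
    congr 1; ext ω
    rw [← Real.exp_add]; ring_nf
  rw [hmgf]
  calc Real.exp (-(t * μ)) * ∫ ω, Real.exp (t * Y ω) ∂P
      ≤ Real.exp (-(t * μ)) * (1 - μ + μ * Real.exp t) := by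
        apply mul_le_mul_of_nonneg_left hI (Real.exp_nonneg _)
    _ ≤ Real.exp (-(t * μ)) * Real.exp (t * μ + t ^ 2 / 8) := by
        apply mul_le_mul_of_nonneg_left (hoeffding_aux hμ0 hμ1 t) (Real.exp_nonneg _)
    _ = Real.exp (t ^ 2 / 8) := by rw [← Real.exp_add]; ring_nf

lemma hoeffding_tail {Ω : Type*} [MeasurableSpace Ω] (P : Measure Ω)
    [IsProbabilityMeasure P] (X : ℕ → Ω → ℝ) (hXmeas : ∀ n, Measurable (X n))
    (hindep : iIndepFun X P)
    (hbdd : ∀ n ω, X n ω ∈ Set.Icc (0:ℝ) 1)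
    (μ : ℝ) (hmean : ∀ n, ∫ ω, X n ω ∂P = μ)
    (n : ℕ) (δ : ℝ) (hδ : 0 < δ) :
    (P {ω | (n:ℝ) * (μ + δ) ≤ ∑ k ∈ Finset.range n, X k ω}).toReal
      ≤ Real.exp (-2 * n * δ ^ 2) := by
  set Z : ℕ → Ω → ℝ := fun k ω => X k ω - μ with hZ
  have hZmeas : ∀ k, Measurable (Z k) := fun k => (hXmeas k).sub_const μ
  have hZindep : iIndepFun Z P :=
    hindep.comp (fun _ x => x - μ) (fun _ => measurable_id.sub_const μ)
  have hset : {ω | (n:ℝ) * (μ + δ) ≤ ∑ k ∈ Finset.range n, X k ω}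
      = {ω | (n:ℝ) * δ ≤ (∑ k ∈ Finset.range n, Z k) ω} := by
    ext ω
    simp only [Set.mem_setOf_eq, Finset.sum_apply, hZ, Finset.sum_sub_distrib,
      Finset.sum_const, Finset.card_range, nsmul_eq_mul]
    constructor <;> intro h <;> nlinarith
  rw [hset]
  have hZint : ∀ (t : ℝ) (k : ℕ), Integrable (fun ω => Real.exp (t * Z k ω)) P := by
    intro t k
    apply integrable_exp_of_bdd P (hZmeas k) (C := 1 + |μ|)
    intro ω
    have h := hbdd k ω
    rw [abs_le]
    constructor <;> simp only [hZ] <;> nlinarith [h.1, h.2, abs_nonneg μ, le_abs_self μ, neg_abs_le μ]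
  have hsumint : Integrable (fun ω => Real.exp ((4*δ) * (∑ k ∈ Finset.range n, Z k) ω)) P := by
    have hmeasS : Measurable (∑ k ∈ Finset.range n, Z k) := by
      have : (∑ k ∈ Finset.range n, Z k) = fun ω => ∑ k ∈ Finset.range n, Z k ω := by
        ext ω; simp [Finset.sum_apply]
      rw [this]
      exact Finset.measurable_sum _ (fun k _ => hZmeas k)
    apply integrable_exp_of_bdd P hmeasS (C := n * (1 + |μ|))
    intro ω
    rw [Finset.sum_apply]
    calc |∑ k ∈ Finset.range n, Z k ω| ≤ ∑ k ∈ Finset.range n, |Z k ω| :=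
          Finset.abs_sum_le_sum_abs _ _
      _ ≤ ∑ k ∈ Finset.range n, (1 + |μ|) := by
          apply Finset.sum_le_sum
          intro k _
          have h := hbdd k ω
          rw [abs_le]
          constructor <;> simp only [hZ] <;> nlinarith [h.1, h.2, le_abs_self μ, neg_abs_le μ]
      _ = n * (1 + |μ|) := by rw [Finset.sum_const, Finset.card_range, nsmul_eq_mul]
  have hcher := measure_ge_le_exp_mul_mgf (μ := P) (X := ∑ k ∈ Finset.range n, Z k)
    ((n:ℝ) * δ) (by positivity : (0:ℝ) ≤ 4 * δ) hsumint
  have hmgfsum : mgf (∑ k ∈ Finset.range n, Z k) P (4*δ)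
      = ∏ k ∈ Finset.range n, mgf (Z k) P (4*δ) :=
    hZindep.mgf_sum hZmeas (Finset.range n)
  have hmgfbd : ∏ k ∈ Finset.range n, mgf (Z k) P (4*δ)
      ≤ Real.exp ((4*δ)^2/8) ^ n := by
    calc ∏ k ∈ Finset.range n, mgf (Z k) P (4*δ)
        ≤ ∏ _k ∈ Finset.range n, Real.exp ((4*δ)^2/8) :=
          Finset.prod_le_prod (fun k _ => mgf_nonneg)
            (fun k _ => mgf_centered_le P (hXmeas k) (hbdd k) (hmean k) (4*δ))
      _ = Real.exp ((4*δ)^2/8) ^ n := by rw [Finset.prod_const, Finset.card_range]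
  calc (P {ω | (n:ℝ) * δ ≤ (∑ k ∈ Finset.range n, Z k) ω}).toReal
      ≤ Real.exp (-(4*δ) * ((n:ℝ)*δ)) * mgf (∑ k ∈ Finset.range n, Z k) P (4*δ) := hcher
    _ ≤ Real.exp (-(4*δ) * ((n:ℝ)*δ)) * Real.exp ((4*δ)^2/8) ^ n := by
        rw [hmgfsum]
        exact mul_le_mul_of_nonneg_left hmgfbd (Real.exp_nonneg _)
    _ = Real.exp (-2 * n * δ ^ 2) := by
        rw [← Real.exp_nat_mul, ← Real.exp_add]
        congr 1; ring

lemma geom_tail_le {r : ℝ} (hr0 : 0 < r) (hr1 : r < 1) (T : ℕ) :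
    ∑ n ∈ Finset.Icc 1 T, r ^ n ≤ r / (1 - r) := by
  have h1 : Finset.Icc 1 T = Finset.Ico 1 (T + 1) := by
    rw [Finset.Ico_add_one_right_eq_Icc]
  rw [h1, Finset.sum_Ico_eq_sum_range]
  simp only [Nat.add_sub_cancel]
  have h2 : ∀ i : ℕ, r ^ (1 + i) = r * r ^ i := fun i => by rw [pow_add, pow_one]
  rw [Finset.sum_congr rfl (fun i _ => h2 i), ← Finset.mul_sum, geom_sum_eq hr1.ne]
  have h3 : (r ^ T - 1) / (r - 1) = (1 - r ^ T) / (1 - r) := by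
    rw [← neg_div_neg_eq]; ring_nf
  rw [h3]
  have h4 : (1 - r ^ T) / (1 - r) ≤ 1 / (1 - r) := by
    rw [div_le_div_iff₀ (by linarith) (by linarith)]
    nlinarith [pow_nonneg hr0.le T]
  calc r * ((1 - r ^ T) / (1 - r)) ≤ r * (1 / (1 - r)) :=
        mul_le_mul_of_nonneg_left h4 hr0.le
    _ = r / (1 - r) := by ring


end Auxiliary

/-- Lemma B.3 (UCB count bound): for i.i.d. rewards in `[0,1]` with mean `μ`
and `μ < μ_λ - ε` with gap `Δ = μ_λ - μ > 2ε`, the sum over `n = 1, …, T` of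
`P[μ̂_n + √(log T/(2n)) ≥ μ_λ - ε]` is at most
`log T/(2(Δ-2ε)²) + 1/(2ε²)`. -/
theorem ucb_count_bound
    {Ω : Type*} [MeasurableSpace Ω] (P : Measure Ω) [IsProbabilityMeasure P]
    (X : ℕ → Ω → ℝ) (hXmeas : ∀ n, Measurable (X n))
    (hindep : iIndepFun X P)
    (hident : ∀ n, Measure.map (X n) P = Measure.map (X 0) P)
    (hbdd : ∀ n ω, X n ω ∈ Set.Icc (0:ℝ) 1)
    (μ : ℝ) (hmean : ∀ n, ∫ ω, X n ω ∂P = μ)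
    (μlam ε : ℝ) (hε : 0 < ε) (hgap : 2 * ε < μlam - μ)
    (T : ℕ) (hT : 1 ≤ T) :
    (∑ n ∈ Finset.Icc 1 T,
        (P {ω | μlam - ε ≤ (∑ k ∈ Finset.range n, X k ω) / n
            + Real.sqrt (Real.log (T : ℝ) / (2 * n))}).toReal)
      ≤ Real.log (T : ℝ) / (2 * ((μlam - μ) - 2 * ε) ^ 2) + 1 / (2 * ε ^ 2) := by
  set c : ℝ := (μlam - μ) - 2 * ε with hc
  have hcpos : 0 < c := by simp only [hc]; linarith
  have hlogT : 0 ≤ Real.log (T : ℝ) := by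
    apply Real.log_nonneg
    exact_mod_cast hT
  set n0 : ℝ := Real.log (T : ℝ) / (2 * c ^ 2) with hn0
  have hn0nonneg : 0 ≤ n0 := by positivity
  -- pointwise bound on each probability
  have hterm : ∀ n ∈ Finset.Icc 1 T,
      (P {ω | μlam - ε ≤ (∑ k ∈ Finset.range n, X k ω) / n
          + Real.sqrt (Real.log (T : ℝ) / (2 * n))}).toReal
      ≤ (if (n:ℝ) < n0 then 1 else 0) + Real.exp (-2 * n * ε ^ 2) := by
    intro n hn
    rw [Finset.mem_Icc] at hn
    have hn1 : 1 ≤ n := hn.1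
    have hnpos : (0:ℝ) < n := by exact_mod_cast hn1
    by_cases hcase : (n:ℝ) < n0
    · rw [if_pos hcase]
      have h1 : (P {ω | μlam - ε ≤ (∑ k ∈ Finset.range n, X k ω) / n
          + Real.sqrt (Real.log (T : ℝ) / (2 * n))}).toReal ≤ 1 := by
        calc (P {ω | μlam - ε ≤ (∑ k ∈ Finset.range n, X k ω) / n
              + Real.sqrt (Real.log (T : ℝ) / (2 * n))}).toReal
            ≤ (P Set.univ).toReal := by
              apply ENNReal.toReal_mono (measure_ne_top P _)
              exact measure_mono (Set.subset_univ _)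
          _ = 1 := by simp
      have h2 : 0 ≤ Real.exp (-2 * n * ε ^ 2) := Real.exp_nonneg _
      linarith
    · rw [if_neg hcase]
      push_neg at hcase
      rw [zero_add]
      -- sqrt term is at most c
      have hsqrt : Real.sqrt (Real.log (T : ℝ) / (2 * n)) ≤ c := by
        rw [← Real.sqrt_sq hcpos.le]
        apply Real.sqrt_le_sqrt
        rw [div_le_iff₀ (by positivity)]
        calc Real.log (T:ℝ) = n0 * (2 * c ^ 2) := by
              rw [hn0]; field_simp
          _ ≤ (n:ℝ) * (2 * c ^ 2) := by
              apply mul_le_mul_of_nonneg_right hcase (by positivity)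
          _ = c ^ 2 * (2 * n) := by ring
      have hsub : {ω | μlam - ε ≤ (∑ k ∈ Finset.range n, X k ω) / n
            + Real.sqrt (Real.log (T : ℝ) / (2 * n))}
          ⊆ {ω | (n:ℝ) * (μ + ε) ≤ ∑ k ∈ Finset.range n, X k ω} := by
        intro ω hω
        simp only [Set.mem_setOf_eq] at hω ⊢
        have h1 : μ + ε ≤ (∑ k ∈ Finset.range n, X k ω) / n := by
          have : μ + ε = μlam - ε - c := by rw [hc]; ring
          rw [this]; linarith
        calc (n:ℝ) * (μ + ε) ≤ (n:ℝ) * ((∑ k ∈ Finset.range n, X k ω) / n) :=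
              mul_le_mul_of_nonneg_left h1 hnpos.le
          _ = ∑ k ∈ Finset.range n, X k ω := by field_simp
      calc (P {ω | μlam - ε ≤ (∑ k ∈ Finset.range n, X k ω) / n
            + Real.sqrt (Real.log (T : ℝ) / (2 * n))}).toReal
          ≤ (P {ω | (n:ℝ) * (μ + ε) ≤ ∑ k ∈ Finset.range n, X k ω}).toReal := by
            apply ENNReal.toReal_mono (measure_ne_top P _)
            exact measure_mono hsub
        _ ≤ Real.exp (-2 * n * ε ^ 2) :=
            hoeffding_tail P X hXmeas hindep hbdd μ hmean n ε hε
  calc (∑ n ∈ Finset.Icc 1 T,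
        (P {ω | μlam - ε ≤ (∑ k ∈ Finset.range n, X k ω) / n
            + Real.sqrt (Real.log (T : ℝ) / (2 * n))}).toReal)
      ≤ ∑ n ∈ Finset.Icc 1 T,
          ((if (n:ℝ) < n0 then 1 else 0) + Real.exp (-2 * n * ε ^ 2)) :=
        Finset.sum_le_sum hterm
    _ = (∑ n ∈ Finset.Icc 1 T, if (n:ℝ) < n0 then (1:ℝ) else 0)
        + ∑ n ∈ Finset.Icc 1 T, Real.exp (-2 * n * ε ^ 2) := Finset.sum_add_distrib
    _ ≤ n0 + 1 / (2 * ε ^ 2) := by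
        gcongr
        · -- counting part
          classical
          rw [← Finset.sum_filter]
          simp only [Finset.sum_const, nsmul_eq_mul, mul_one]
          set S := (Finset.Icc 1 T).filter (fun n : ℕ => (n:ℝ) < n0) with hS
          set m : ℕ := ⌈n0⌉₊ with hm
          have hsub : S ⊆ Finset.Icc 1 (m - 1) := by
            intro n hn
            rw [hS, Finset.mem_filter, Finset.mem_Icc] at hn
            rw [Finset.mem_Icc]
            refine ⟨hn.1.1, ?_⟩
            have h1 : (n:ℝ) < m := lt_of_lt_of_le hn.2 (Nat.le_ceil n0)
            have h2 : n < m := by exact_mod_cast h1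
            omega
          calc ((S.card : ℝ)) ≤ ((Finset.Icc 1 (m-1)).card : ℝ) := by
                exact_mod_cast Finset.card_le_card hsub
            _ = ((m - 1 : ℕ) : ℝ) := by rw [Nat.card_Icc]; norm_num
            _ ≤ n0 := by
                rcases Nat.eq_zero_or_pos m with h0 | hpos
                · simp [h0]; exact hn0nonneg
                · have h1 : ((m - 1 : ℕ) : ℝ) = (m:ℝ) - 1 := by
                    push_cast [Nat.cast_sub hpos]; ring
                  rw [h1]
                  have := Nat.ceil_lt_add_one hn0nonneg
                  rw [← hm] at this
                  linarith
        · -- geometric part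
          set r : ℝ := Real.exp (-2 * ε ^ 2) with hr
          have hr0 : 0 < r := Real.exp_pos _
          have hr1 : r < 1 := by
            rw [hr, Real.exp_lt_one_iff]; nlinarith
          have hre : ∀ n : ℕ, Real.exp (-2 * n * ε ^ 2) = r ^ n := by
            intro n
            rw [hr, ← Real.exp_nat_mul]
            congr 1; ring
          have hkey : (2 * ε ^ 2 + 1) * r ≤ 1 := by
            have := Real.add_one_le_exp (2 * ε ^ 2)
            calc (2 * ε ^ 2 + 1) * r ≤ Real.exp (2 * ε ^ 2) * r := by
                  apply mul_le_mul_of_nonneg_right this hr0.le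
              _ = 1 := by rw [hr, ← Real.exp_add]; simp
          calc ∑ n ∈ Finset.Icc 1 T, Real.exp (-2 * n * ε ^ 2)
              = ∑ n ∈ Finset.Icc 1 T, r ^ n := by
                apply Finset.sum_congr rfl; intro n _; exact hre n
            _ ≤ r / (1 - r) := geom_tail_le hr0 hr1 T
            _ ≤ 1 / (2 * ε ^ 2) := by
                rw [div_le_div_iff₀ (by linarith) (by positivity)]
                nlinarith
end
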